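/- Let C = K[y_1,...,y_5]/(y_1^2,...,y_5^2, y_1y_2y_3y_4) over a field K of characteristic 0. Then the Hilbert series of C is 1 + 5t + 10t^2 + 10t^3 + 4t^4, and C has the Weak Lefschetz Property with Lefschetz element ℓ = y_1 + y_2 + y_3 + y_4 + y_5. -/

import Mathlib

open MvPolynomial

/-- The degree-`n` graded piece of the quotient of a polynomial ring by a
(homogeneous) ideal: the image of the homogeneous degree-`n` polynomials. -/
noncomputable def gradedPiece {K σ : Type*} [Field K] (I : Ideal (MvPolynomial σ K))
    (n : ℕ) : Submodule K (MvPolynomial σ K ⧸ I) :=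
  Submodule.map (Ideal.Quotient.mkₐ K I).toLinearMap (homogeneousSubmodule σ K n)

/-- The ideal `(y_1^2,…,y_5^2, y_1y_2y_3y_4)`, an initial-ideal presentation of
the AOT algebra of the 5-cycle. -/
noncomputable def fiveCycleIdeal (K : Type*) [Field K] : Ideal (MvPolynomial (Fin 5) K) :=
  Ideal.span ((Set.range fun k : Fin 5 => (X k : MvPolynomial (Fin 5) K) ^ 2) ∪
    {X 0 * X 1 * X 2 * X 3})

/-!
Since `C` is the quotient by a monomial ideal, the residues of the standard monomials (those
divisible by no generator) form a basis of each graded piece; here they are the squarefree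
`y^S` with `S ⊉ {1,2,3,4}`, which gives the Hilbert function by counting subsets.

In degrees `i ≤ 2` the generator `y₁y₂y₃y₄` is invisible, so the coefficients of `ℓ·p` are those
of the up map of the Boolean lattice of a 5-set; in characteristic `0` it is injective for
`i < 5/2`, certified by an explicit left inverse whose integer weights depend only on `|T ∩ S|`.
From degree `3` to `4`, every standard `y^T` contains `y₅`, and `ℓ·y^{T∖5} = y^T` in `C` because
the other terms are multiples of some `y_k²` or of `y₁y₂y₃y₄`.
-/

open Finset

namespace MvPolynomial

section MonomialIdeal

variable {σ R K : Type*} [CommSemiring R] [Field K] {M : Set (σ →₀ ℕ)}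

def IsStandard (M : Set (σ →₀ ℕ)) (m : σ →₀ ℕ) : Prop :=
  ∀ s ∈ M, ¬ s ≤ m

variable (R) in
noncomputable def monomialIdeal (M : Set (σ →₀ ℕ)) : Ideal (MvPolynomial σ R) :=
  Ideal.span ((fun s => monomial s (1 : R)) '' M)

theorem mem_monomialIdeal_iff {p : MvPolynomial σ R} :
    p ∈ monomialIdeal R M ↔ ∀ m ∈ p.support, ¬ IsStandard M m := by
  simp only [monomialIdeal, mem_ideal_span_monomial_image, IsStandard, not_forall, not_not,
    exists_prop]

theorem coeff_eq_zero_of_mem_monomialIdeal {p : MvPolynomial σ R} (hp : p ∈ monomialIdeal R M)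
    {m : σ →₀ ℕ} (hm : IsStandard M m) : coeff m p = 0 :=
  notMem_support_iff.mp fun h => mem_monomialIdeal_iff.mp hp m h hm

theorem monomial_mem_monomialIdeal {m : σ →₀ ℕ} (hm : ¬ IsStandard M m) (c : R) :
    monomial m c ∈ monomialIdeal R M :=
  mem_monomialIdeal_iff.mpr fun _ h => (Finset.mem_singleton.mp (support_monomial_subset h)) ▸ hm

theorem disjoint_restrictSupport_ker_mkₐ {s : Set (σ →₀ ℕ)} (hs : ∀ m ∈ s, IsStandard M m) :
    Disjoint (restrictSupport K s)
      (LinearMap.ker (Ideal.Quotient.mkₐ K (monomialIdeal K M)).toLinearMap) := by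
  refine Submodule.disjoint_def.mpr fun p hs' hker => ?_
  rw [LinearMap.mem_ker, AlgHom.toLinearMap_apply, Ideal.Quotient.mkₐ_eq_mk,
    Ideal.Quotient.eq_zero_iff_mem] at hker
  ext m
  by_cases hm : m ∈ p.support
  · exact coeff_eq_zero_of_mem_monomialIdeal hker (hs m (hs' hm))
  · exact notMem_support_iff.mp hm

theorem gradedPiece_monomialIdeal (n : ℕ) :
    gradedPiece (monomialIdeal K M) n =
      (restrictSupport K {m | m.degree = n ∧ IsStandard M m}).map
        (Ideal.Quotient.mkₐ K (monomialIdeal K M)).toLinearMap := by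
  classical
  refine le_antisymm ?_ (Submodule.map_mono ?_)
  · rintro _ ⟨p, hp, rfl⟩
    rw [homogeneousSubmodule_eq_finsupp_supported] at hp
    set std := ∑ m ∈ p.support with IsStandard M m, monomial m (coeff m p)
    have hsplit : std - p = -∑ m ∈ p.support with ¬ IsStandard M m, monomial m (coeff m p) := by
      linear_combination (Finset.sum_filter_add_sum_filter_not p.support (IsStandard M)
        fun m => monomial m (coeff m p)).trans p.as_sum.symm
    refine ⟨std, Submodule.sum_mem _ fun m hm => ?_, ?_⟩
    · rw [Finset.mem_filter] at hm
      exact (monomial_mem_restrictSupport K).mpr (Or.inl ⟨hp hm.1, hm.2⟩)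
    · rw [AlgHom.toLinearMap_apply, AlgHom.toLinearMap_apply, Ideal.Quotient.mkₐ_eq_mk,
        Ideal.Quotient.mk_eq_mk_iff_sub_mem, hsplit, neg_mem_iff]
      exact Ideal.sum_mem _ fun m hm => monomial_mem_monomialIdeal (Finset.mem_filter.mp hm).2 _
  · rw [homogeneousSubmodule_eq_finsupp_supported]
    exact restrictSupport_mono K fun m hm => hm.1

theorem finrank_gradedPiece_monomialIdeal (n : ℕ) :
    Module.finrank K (gradedPiece (monomialIdeal K M) n) =
      Nat.card {m | m.degree = n ∧ IsStandard M m} := by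
  rw [gradedPiece_monomialIdeal, ← LinearMap.range_domRestrict,
    LinearMap.finrank_range_of_inj (LinearMap.injective_domRestrict_iff.mpr
      (disjoint_restrictSupport_ker_mkₐ fun _ hm => hm.2)),
    Module.finrank_eq_nat_card_basis (basisRestrictSupport K _)]

end MonomialIdeal

section SqfreeExp

variable {σ : Type*}

noncomputable def sqfreeExp (S : Finset σ) : σ →₀ ℕ :=
  ∑ k ∈ S, Finsupp.single k 1

theorem degree_sqfreeExp (S : Finset σ) : (sqfreeExp S).degree = S.card := by
  simp [sqfreeExp]

variable [DecidableEq σ]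

theorem sqfreeExp_apply (S : Finset σ) (k : σ) : sqfreeExp S k = if k ∈ S then 1 else 0 := by
  simp [sqfreeExp, Finsupp.finsetSum_apply, Finsupp.single_apply]

theorem support_sqfreeExp (S : Finset σ) : (sqfreeExp S).support = S := by
  ext k
  simp [sqfreeExp_apply]

theorem sqfreeExp_insert {S : Finset σ} {k : σ} (hk : k ∉ S) :
    sqfreeExp (insert k S) = Finsupp.single k 1 + sqfreeExp S :=
  Finset.sum_insert hk

theorem single_add_sqfreeExp_erase {S : Finset σ} {k : σ} (hk : k ∈ S) :
    Finsupp.single k 1 + sqfreeExp (S.erase k) = sqfreeExp S :=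
  Finset.add_sum_erase S _ hk

theorem sqfreeExp_le_iff {S : Finset σ} {m : σ →₀ ℕ} : sqfreeExp S ≤ m ↔ S ⊆ m.support := by
  simp only [Finsupp.le_def, sqfreeExp_apply, Finset.subset_iff, Finsupp.mem_support_iff]
  refine forall_congr' fun k => ?_
  split_ifs with hk <;> simp [hk, Nat.one_le_iff_ne_zero]

theorem sqfreeExp_support {m : σ →₀ ℕ} (hm : ∀ k, m k ≤ 1) : sqfreeExp m.support = m := by
  ext k
  have := hm k
  simp only [sqfreeExp_apply, Finsupp.mem_support_iff]
  split_ifs <;> omega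

theorem coeff_sqfreeExp_mul_sum_X [Fintype σ] {R : Type*} [CommSemiring R]
    (p : MvPolynomial σ R) (T : Finset σ) :
    coeff (sqfreeExp T) (p * ∑ k, X k) = ∑ k ∈ T, coeff (sqfreeExp (T.erase k)) p := by
  rw [Finset.mul_sum, coeff_sum, ← Finset.sum_filter_of_ne (p := (· ∈ T)) ?_,
    Finset.filter_mem_eq_inter, Finset.univ_inter]
  · refine Finset.sum_congr rfl fun k hk => ?_
    rw [coeff_mul_X', support_sqfreeExp, if_pos hk, ← single_add_sqfreeExp_erase hk,
      add_tsub_cancel_left]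
  · intro k _ hne
    rw [coeff_mul_X', support_sqfreeExp] at hne
    by_contra hk
    exact hne (if_neg hk)

end SqfreeExp

end MvPolynomial

theorem Finset.sum_sum_erase_eq_sum_sum_insert {α M : Type*} [Fintype α] [DecidableEq α]
    [AddCommMonoid M] (f : Finset α → Finset α → M) :
    ∑ T, ∑ k ∈ T, f T (T.erase k) = ∑ R, ∑ j ∈ Rᶜ, f (insert j R) R := by
  calc ∑ T, ∑ k ∈ T, f T (T.erase k) = ∑ k, ∑ T with k ∈ T, f T (T.erase k) :=
        Finset.sum_comm' (by simp)
    _ = ∑ k, ∑ R with k ∉ R, f (insert k R) R := by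
        refine Finset.sum_congr rfl fun k _ => Finset.sum_nbij' (·.erase k) (insert k)
          (by simp) (by simp) (fun T hT => insert_erase (mem_filter.mp hT).2)
          (fun R hR => erase_insert (mem_filter.mp hR).2) fun T hT => ?_
        rw [insert_erase (mem_filter.mp hT).2]
    _ = ∑ R, ∑ j ∈ Rᶜ, f (insert j R) R := (Finset.sum_comm' (by simp)).symm

/- For `|S| = i ≤ 2`, summing `upLeftInverseWeight i |T ∩ S|` over the `(i+1)`-sets
`T = R ∪ {j}` gives `upLeftInverseScale i` if `R = S` and `0` otherwise
(`sum_upLeftInverseWeight`): these weights are a left inverse of multiplication by `ℓ` on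
squarefree monomials of degree `i`. -/
def upLeftInverseWeight : ℕ → ℕ → ℤ
  | 0, _ => 1
  | 1, 1 => 3
  | 1, _ => -1
  | 2, 1 => -1
  | _, _ => 2

def upLeftInverseScale : ℕ → ℤ
  | 0 => 5
  | 1 => 12
  | _ => 6

theorem upLeftInverseScale_ne_zero (i : ℕ) : upLeftInverseScale i ≠ 0 := by
  unfold upLeftInverseScale
  split <;> decide

theorem sum_upLeftInverseWeight :
    ∀ i ≤ 2, ∀ S R : Finset (Fin 5), S.card = i →
      ∑ j ∈ Rᶜ, (if (insert j R).card = i + 1 then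
        upLeftInverseWeight i (insert j R ∩ S).card else 0) =
      if R = S then upLeftInverseScale i else 0 := by
  decide

theorem eq_zero_of_forall_sum_erase_eq_zero {K : Type*} [CommRing K] [NoZeroDivisors K]
    [CharZero K] {i : ℕ} (hi : i ≤ 2) {c : Finset (Fin 5) → K}
    (hc : ∀ T : Finset (Fin 5), T.card = i + 1 → ∑ k ∈ T, c (T.erase k) = 0)
    {S : Finset (Fin 5)} (hS : S.card = i) : c S = 0 := by
  let w (T : Finset (Fin 5)) : ℤ :=
    if T.card = i + 1 then upLeftInverseWeight i (T ∩ S).card else 0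
  have h0 : ∑ T, ∑ k ∈ T, (w T : K) * c (T.erase k) = 0 := by
    refine Finset.sum_eq_zero fun T _ => ?_
    rw [← Finset.mul_sum]
    by_cases hT : T.card = i + 1
    · rw [hc T hT, mul_zero]
    · simp [w, hT]
  have hw (R : Finset (Fin 5)) : ∑ j ∈ Rᶜ, (w (insert j R) : K) =
      if R = S then (upLeftInverseScale i : K) else 0 := by
    rw [← Int.cast_sum, sum_upLeftInverseWeight i hi S R hS]
    split_ifs <;> simp
  rw [Finset.sum_sum_erase_eq_sum_sum_insert fun T R => (w T : K) * c R] at h0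
  simp only [← Finset.sum_mul, hw, ite_mul, zero_mul, Finset.sum_ite_eq', Finset.mem_univ,
    if_true] at h0
  exact (mul_eq_zero.mp h0).resolve_left (Int.cast_ne_zero.mpr (upLeftInverseScale_ne_zero i))

namespace MvPolynomial

def fiveCycleExponents : Set (Fin 5 →₀ ℕ) :=
  Set.range (fun k => Finsupp.single k 2) ∪ {sqfreeExp {0, 1, 2, 3}}

theorem fiveCycleIdeal_eq_monomialIdeal (K : Type*) [Field K] :
    fiveCycleIdeal K = monomialIdeal K fiveCycleExponents := by
  rw [fiveCycleIdeal, monomialIdeal, fiveCycleExponents, Set.image_union, Set.image_singleton,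
    ← Set.range_comp]
  simp only [Function.comp_def, ← X_pow_eq_monomial, sqfreeExp, monomial_sum_one]
  simp [Finset.prod_insert, mul_assoc]

theorem isStandard_fiveCycleExponents_iff {m : Fin 5 →₀ ℕ} :
    IsStandard fiveCycleExponents m ↔ (∀ k, m k ≤ 1) ∧ ¬ {0, 1, 2, 3} ⊆ m.support := by
  simp [IsStandard, fiveCycleExponents, Finsupp.single_le_iff, sqfreeExp_le_iff, and_comm]

theorem isStandard_sqfreeExp_iff {S : Finset (Fin 5)} :
    IsStandard fiveCycleExponents (sqfreeExp S) ↔ ¬ {0, 1, 2, 3} ⊆ S := by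
  rw [isStandard_fiveCycleExponents_iff, support_sqfreeExp]
  exact and_iff_right fun k => by rw [sqfreeExp_apply]; split_ifs <;> simp

noncomputable def fiveCycleStandardEquiv (n : ℕ) :
    {m : Fin 5 →₀ ℕ | m.degree = n ∧ IsStandard fiveCycleExponents m} ≃
      {S : Finset (Fin 5) // S.card = n ∧ ¬ {0, 1, 2, 3} ⊆ S} where
  toFun m :=
    have hm := isStandard_fiveCycleExponents_iff.mp m.2.2
    ⟨m.1.support, by rw [← degree_sqfreeExp, sqfreeExp_support hm.1]; exact m.2.1, hm.2⟩
  invFun S := ⟨sqfreeExp S.1, by rw [degree_sqfreeExp]; exact S.2.1,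
    isStandard_sqfreeExp_iff.mpr S.2.2⟩
  left_inv m := Subtype.ext (sqfreeExp_support (isStandard_fiveCycleExponents_iff.mp m.2.2).1)
  right_inv S := Subtype.ext (support_sqfreeExp S.1)

variable {K : Type*} [Field K]

theorem finrank_fiveCycle_gradedPiece (n : ℕ) :
    Module.finrank K (gradedPiece (monomialIdeal K fiveCycleExponents) n) =
      #{S : Finset (Fin 5) | S.card = n ∧ ¬ {0, 1, 2, 3} ⊆ S} := by
  rw [finrank_gradedPiece_monomialIdeal, Nat.card_congr (fiveCycleStandardEquiv n),
    Nat.card_eq_fintype_card, Fintype.card_subtype]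

theorem fiveCycle_gradedPiece_eq_bot {n : ℕ} (hn : 5 ≤ n) :
    gradedPiece (monomialIdeal K fiveCycleExponents) n = ⊥ := by
  have hempty : {m : Fin 5 →₀ ℕ | m.degree = n ∧ IsStandard fiveCycleExponents m} = ∅ := by
    refine Set.eq_empty_iff_forall_notMem.mpr fun m hm => ?_
    obtain ⟨S, hcard, hS⟩ := fiveCycleStandardEquiv n ⟨m, hm⟩
    have hle := S.card_le_univ
    rw [Fintype.card_fin] at hle
    rw [Finset.eq_univ_of_card S (by rw [Fintype.card_fin]; omega)] at hS
    exact hS (Finset.subset_univ _)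
  rw [gradedPiece_monomialIdeal, hempty, restrictSupport_eq_span, Set.image_empty,
    Submodule.span_empty, Submodule.map_bot]

theorem mk_sum_X_mul_monomial_sqfreeExp (S : Finset (Fin 5)) :
    Ideal.Quotient.mk (monomialIdeal K fiveCycleExponents)
        ((∑ k, X k) * monomial (sqfreeExp S) 1) =
      ∑ k ∈ Sᶜ, Ideal.Quotient.mk _ (monomial (sqfreeExp (insert k S)) 1) := by
  rw [Finset.sum_mul, map_sum, ← Finset.sum_add_sum_compl S, Finset.sum_eq_zero, zero_add]
  · refine Finset.sum_congr rfl fun k hk => ?_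
    rw [sqfreeExp_insert (Finset.mem_compl.mp hk), X, monomial_mul, one_mul]
  · intro k hk
    rw [Ideal.Quotient.eq_zero_iff_mem, X, monomial_mul, one_mul]
    refine monomial_mem_monomialIdeal (fun h => h _ (Or.inl ⟨k, rfl⟩) ?_) _
    rw [Finsupp.single_le_iff, Finsupp.add_apply, Finsupp.single_eq_same, sqfreeExp_apply,
      if_pos hk]

theorem fiveCycle_sum_X_mul_injective [CharZero K] {i : ℕ} (hi : i ≤ 2)
    {x : MvPolynomial (Fin 5) K ⧸ monomialIdeal K fiveCycleExponents}
    (hx : x ∈ gradedPiece (monomialIdeal K fiveCycleExponents) i)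
    (hℓx : Ideal.Quotient.mk _ (∑ k, X k) * x = 0) : x = 0 := by
  rw [gradedPiece_monomialIdeal] at hx
  obtain ⟨p, hp, rfl⟩ := hx
  rw [AlgHom.toLinearMap_apply, Ideal.Quotient.mkₐ_eq_mk] at hℓx ⊢
  rw [← map_mul, Ideal.Quotient.eq_zero_iff_mem, mul_comm] at hℓx
  have hup (T : Finset (Fin 5)) (hT : T.card = i + 1) :
      ∑ k ∈ T, coeff (sqfreeExp (T.erase k)) p = 0 := by
    rw [← coeff_sqfreeExp_mul_sum_X]
    refine coeff_eq_zero_of_mem_monomialIdeal hℓx (isStandard_sqfreeExp_iff.mpr fun hsub => ?_)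
    have h4 : ({0, 1, 2, 3} : Finset (Fin 5)).card = 4 := by decide
    have := Finset.card_le_card hsub
    omega
  suffices p = 0 by rw [this, map_zero]
  ext m
  rw [coeff_zero]
  by_contra hm
  obtain ⟨hdeg, hstd⟩ := hp (mem_support_iff.mpr hm)
  rw [← sqfreeExp_support (isStandard_fiveCycleExponents_iff.mp hstd).1] at hdeg hm
  rw [degree_sqfreeExp] at hdeg
  exact hm (eq_zero_of_forall_sum_erase_eq_zero (c := fun S => coeff (sqfreeExp S) p) hi hup hdeg)

theorem fiveCycle_sum_X_mul_surjective_three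
    {y : MvPolynomial (Fin 5) K ⧸ monomialIdeal K fiveCycleExponents}
    (hy : y ∈ gradedPiece (monomialIdeal K fiveCycleExponents) 4) :
    ∃ x ∈ gradedPiece (monomialIdeal K fiveCycleExponents) 3,
      Ideal.Quotient.mk _ (∑ k, X k) * x = y := by
  suffices gradedPiece (monomialIdeal K fiveCycleExponents) 4 ≤
      (gradedPiece (monomialIdeal K fiveCycleExponents) 3).map
        (LinearMap.mulLeft K (Ideal.Quotient.mk _ (∑ k, X k))) from this hy
  rw [gradedPiece_monomialIdeal 4, restrictSupport_eq_span, Submodule.map_span,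
    Submodule.span_le, ← Set.image_comp]
  rintro _ ⟨m, ⟨hdeg, hstd⟩, rfl⟩
  obtain ⟨hle, hT⟩ := isStandard_fiveCycleExponents_iff.mp hstd
  rw [← sqfreeExp_support hle] at hdeg ⊢
  rw [degree_sqfreeExp] at hdeg
  have key : ∀ T : Finset (Fin 5), T.card = 4 → ¬ {0, 1, 2, 3} ⊆ T →
      4 ∈ T ∧ ∀ k ∈ (T.erase 4)ᶜ, k ≠ 4 → {0, 1, 2, 3} ⊆ insert k (T.erase 4) := by
    decide
  obtain ⟨h4, hfill⟩ := key _ hdeg hT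
  refine ⟨Ideal.Quotient.mk _ (monomial (sqfreeExp (m.support.erase 4)) 1),
    ⟨_, isHomogeneous_monomial _ ?_, rfl⟩, ?_⟩
  · rw [degree_sqfreeExp, Finset.card_erase_of_mem h4, hdeg]
  · rw [LinearMap.mulLeft_apply, ← map_mul, mk_sum_X_mul_monomial_sqfreeExp,
      Finset.sum_eq_single 4 (fun k hk hk4 => ?_) (by simp), Finset.insert_erase h4]
    · rfl
    · rw [Ideal.Quotient.eq_zero_iff_mem]
      exact monomial_mem_monomialIdeal
        (fun h => isStandard_sqfreeExp_iff.mp h (hfill k hk hk4)) _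

end MvPolynomial

/-- `C = K[y_1,…,y_5]/(y_1^2,…,y_5^2, y_1y_2y_3y_4)` has Hilbert series
`1 + 5t + 10t^2 + 10t^3 + 4t^4` and has the Weak Lefschetz Property with
Lefschetz element `ℓ = y_1 + y_2 + y_3 + y_4 + y_5`. -/
theorem stmt14 {K : Type*} [Field K] [CharZero K] :
    Module.finrank K (gradedPiece (fiveCycleIdeal K) 0) = 1 ∧
    Module.finrank K (gradedPiece (fiveCycleIdeal K) 1) = 5 ∧
    Module.finrank K (gradedPiece (fiveCycleIdeal K) 2) = 10 ∧
    Module.finrank K (gradedPiece (fiveCycleIdeal K) 3) = 10 ∧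
    Module.finrank K (gradedPiece (fiveCycleIdeal K) 4) = 4 ∧
    (∀ i : ℕ, 5 ≤ i → gradedPiece (fiveCycleIdeal K) i = ⊥) ∧
    ∀ i : ℕ,
      (∀ x ∈ gradedPiece (fiveCycleIdeal K) i,
        Ideal.Quotient.mk (fiveCycleIdeal K) (∑ k : Fin 5, X k) * x = 0 → x = 0) ∨
      (∀ y ∈ gradedPiece (fiveCycleIdeal K) (i + 1),
        ∃ x ∈ gradedPiece (fiveCycleIdeal K) i,
          Ideal.Quotient.mk (fiveCycleIdeal K) (∑ k : Fin 5, X k) * x = y) := by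
  rw [fiveCycleIdeal_eq_monomialIdeal]
  refine ⟨?_, ?_, ?_, ?_, ?_, fun i hi => fiveCycle_gradedPiece_eq_bot hi, fun i => ?_⟩
  iterate 5 (rw [finrank_fiveCycle_gradedPiece]; decide)
  rcases lt_trichotomy i 3 with hi | rfl | hi
  · exact Or.inl fun x hx => fiveCycle_sum_X_mul_injective (by omega) hx
  · exact Or.inr fun y hy => fiveCycle_sum_X_mul_surjective_three hy
  · refine Or.inr fun y hy => ⟨0, Submodule.zero_mem _, ?_⟩
    rw [fiveCycle_gradedPiece_eq_bot (by omega), Submodule.mem_bot] at hy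
    rw [mul_zero, hy]
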